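/- Let η be a (1,1)-form with respect to I on a hypercomplex vector space lying in the weight-2 part Λ²_+ together with its SU(2)-orbit. Then η is SU(2)-invariant if and only if 𝓡(η) = 0, where 𝓡 = (𝓙 - i𝓚)/2. -/
import Mathlib


open scoped TensorProduct

noncomputable section

variable {V : Type*} [AddCommGroup V] [Module ℝ V]

/-- Complexification of a real endomorphism. -/
def cext (f : V →ₗ[ℝ] V) : ℂ ⊗[ℝ] V →ₗ[ℂ] ℂ ⊗[ℝ] V := f.baseChange ℂ

/-- The `su(2)`-operator on 2-forms associated with a complex structure `L`: the
derivation extending `α ↦ -α∘L` on 1-forms, evaluated on a 2-form `η`. -/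
def su2Op (L : V →ₗ[ℝ] V) (η : ℂ ⊗[ℝ] V →ₗ[ℂ] ℂ ⊗[ℝ] V →ₗ[ℂ] ℂ)
    (x y : ℂ ⊗[ℝ] V) : ℂ :=
  -(η (cext L x) y + η x (cext L y))

set_option maxHeartbeats 3200000 in
/-- A `(1,1)`-form `η` (with respect to `I`) on a hypercomplex vector space is
`SU(2)`-invariant (invariant under the action of all unit quaternions
`a + bI + cJ + dK`) if and only if `𝓡(η) = 0`, where `𝓡 = (𝓙 - i𝓚)/2`. -/
theorem su2_invariant_iff_raising_zero
    (V : Type*) [AddCommGroup V] [Module ℝ V]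
    (I J K : V →ₗ[ℝ] V)
    (hI : I ∘ₗ I = -LinearMap.id) (hJ : J ∘ₗ J = -LinearMap.id)
    (hK : K ∘ₗ K = -LinearMap.id)
    (hIJ : I ∘ₗ J = K) (hJI : J ∘ₗ I = -K)
    (η : ℂ ⊗[ℝ] V →ₗ[ℂ] ℂ ⊗[ℝ] V →ₗ[ℂ] ℂ)
    (hskew : ∀ x y, η x y = -η y x)
    (htype : ∀ x y : ℂ ⊗[ℝ] V,
      (x ∈ Module.End.eigenspace (cext I) Complex.I →
        y ∈ Module.End.eigenspace (cext I) Complex.I → η x y = 0) ∧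
      (x ∈ Module.End.eigenspace (cext I) (-Complex.I) →
        y ∈ Module.End.eigenspace (cext I) (-Complex.I) → η x y = 0)) :
    (∀ a b c d : ℝ, a ^ 2 + b ^ 2 + c ^ 2 + d ^ 2 = 1 →
        ∀ x y : ℂ ⊗[ℝ] V,
          η (cext (a • LinearMap.id + b • I + c • J + d • K) x)
              (cext (a • LinearMap.id + b • I + c • J + d • K) y) = η x y) ↔
    (∀ x y : ℂ ⊗[ℝ] V,
        (2 : ℂ)⁻¹ * (su2Op J η x y - Complex.I * su2Op K η x y) = 0) := by
  -- pointwise composition facts for complexified operators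
  have cext_comp : ∀ (f g : V →ₗ[ℝ] V) (x : ℂ ⊗[ℝ] V),
      cext (f ∘ₗ g) x = cext f (cext g x) := by
    intro f g x
    simp [cext, LinearMap.baseChange_comp]
  have cneg : ∀ (f : V →ₗ[ℝ] V) (x : ℂ ⊗[ℝ] V), cext (-f) x = -cext f x := by
    intro f x
    simp [cext, LinearMap.baseChange_neg]
  have cid : ∀ x : ℂ ⊗[ℝ] V, cext (LinearMap.id (R := ℝ) (M := V)) x = x := by
    intro x
    simp [cext]
  have cpt : ∀ {f g h' : V →ₗ[ℝ] V}, f ∘ₗ g = h' →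
      ∀ x : ℂ ⊗[ℝ] V, cext f (cext g x) = cext h' x := by
    intro f g h' he x
    rw [← cext_comp, he]
  -- quaternion relations at the level of real endomorphisms
  have hIK : I ∘ₗ K = -J := by
    rw [← hIJ, ← LinearMap.comp_assoc, hI, LinearMap.neg_comp, LinearMap.id_comp]
  have hKI : K ∘ₗ I = J := by
    rw [← hIJ, LinearMap.comp_assoc, hJI, LinearMap.comp_neg, ← hIJ,
      ← LinearMap.comp_assoc, hI, LinearMap.neg_comp, LinearMap.id_comp, neg_neg]
  have hKJ : K ∘ₗ J = -I := by
    rw [← hIJ, LinearMap.comp_assoc, hJ, LinearMap.comp_neg, LinearMap.comp_id]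
  have hJK : J ∘ₗ K = I := by
    rw [← hIJ, ← LinearMap.comp_assoc, hJI, LinearMap.neg_comp, hKJ, neg_neg]
  -- pointwise versions
  have pAA : ∀ x, cext I (cext I x) = -x := fun x => by rw [cpt hI, cneg, cid]
  have pBB : ∀ x, cext J (cext J x) = -x := fun x => by rw [cpt hJ, cneg, cid]
  have pCC : ∀ x, cext K (cext K x) = -x := fun x => by rw [cpt hK, cneg, cid]
  have pAB : ∀ x, cext I (cext J x) = cext K x := fun x => by rw [cpt hIJ]
  have pBA : ∀ x, cext J (cext I x) = -cext K x := fun x => by rw [cpt hJI, cneg]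
  have pAC : ∀ x, cext I (cext K x) = -cext J x := fun x => by rw [cpt hIK, cneg]
  have pCA : ∀ x, cext K (cext I x) = cext J x := fun x => by rw [cpt hKI]
  have pBC : ∀ x, cext J (cext K x) = cext I x := fun x => by rw [cpt hJK]
  have pCB : ∀ x, cext K (cext J x) = -cext I x := fun x => by rw [cpt hKJ, cneg]
  -- eigenvector bookkeeping
  have hPB : ∀ {x : ℂ ⊗[ℝ] V}, cext I x = Complex.I • x →
      cext I (cext J x) = -Complex.I • cext J x := by
    intro x hx
    have h1 := pBA x
    rw [hx, map_smul] at h1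
    rw [pAB, ← neg_neg (cext K x), ← h1, neg_smul]
  have hMB : ∀ {x : ℂ ⊗[ℝ] V}, cext I x = -Complex.I • x →
      cext I (cext J x) = Complex.I • cext J x := by
    intro x hx
    have h1 := pBA x
    rw [hx, map_smul, neg_smul] at h1
    rw [pAB]
    exact (neg_inj.mp h1).symm
  have hPK : ∀ {x : ℂ ⊗[ℝ] V}, cext I x = Complex.I • x →
      cext K x = -(Complex.I • cext J x) := by
    intro x hx
    have h1 := pBA x
    rw [hx, map_smul] at h1
    exact (neg_eq_iff_eq_neg.mpr h1).symm
  have hMK : ∀ {x : ℂ ⊗[ℝ] V}, cext I x = -Complex.I • x →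
      cext K x = Complex.I • cext J x := by
    intro x hx
    have h1 := pBA x
    rw [hx, map_smul, neg_smul] at h1
    exact (neg_inj.mp h1).symm
  -- type (1,1) conditions as equations
  have h11 : ∀ {x y : ℂ ⊗[ℝ] V}, cext I x = Complex.I • x →
      cext I y = Complex.I • y → η x y = 0 := by
    intro x y hx hy
    exact (htype x y).1 (Module.End.mem_eigenspace_iff.mpr hx)
      (Module.End.mem_eigenspace_iff.mpr hy)
  have h22 : ∀ {x y : ℂ ⊗[ℝ] V}, cext I x = -Complex.I • x →
      cext I y = -Complex.I • y → η x y = 0 := by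
    intro x y hx hy
    exact (htype x y).2 (Module.End.mem_eigenspace_iff.mpr hx)
      (Module.End.mem_eigenspace_iff.mpr hy)
  -- eigen-decomposition
  have hdecomp : ∀ x : ℂ ⊗[ℝ] V, ∃ xp xm : ℂ ⊗[ℝ] V,
      cext I xp = Complex.I • xp ∧ cext I xm = -Complex.I • xm ∧ x = xp + xm := by
    intro x
    refine ⟨(2⁻¹ : ℂ) • (x - Complex.I • cext I x),
      (2⁻¹ : ℂ) • (x + Complex.I • cext I x), ?_, ?_, ?_⟩
    · rw [map_smul, map_sub, map_smul, pAA]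
      match_scalars <;>
        first
          | ring1
          | linear_combination Complex.I_sq
          | linear_combination -Complex.I_sq
          | linear_combination (2⁻¹ : ℂ) * Complex.I_sq
          | linear_combination (-2⁻¹ : ℂ) * Complex.I_sq
    · rw [map_smul, map_add, map_smul, pAA]
      match_scalars <;>
        first
          | ring1
          | linear_combination Complex.I_sq
          | linear_combination -Complex.I_sq
          | linear_combination (2⁻¹ : ℂ) * Complex.I_sq
          | linear_combination (-2⁻¹ : ℂ) * Complex.I_sq
    · match_scalars <;> ring
  -- convert ℝ-smul to ℂ-smul expansion of the quaternion action
  have hq : ∀ (a b c d : ℝ) (z : ℂ ⊗[ℝ] V),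
      cext (a • LinearMap.id + b • I + c • J + d • K) z =
        (a : ℂ) • z + (b : ℂ) • cext I z + (c : ℂ) • cext J z + (d : ℂ) • cext K z := by
    intro a b c d z
    have rsmul : ∀ (r : ℝ) (w : ℂ ⊗[ℝ] V), (r : ℂ) • w = r • w := by
      intro r w
      rw [← algebraMap_smul ℂ r w, Complex.coe_algebraMap]
    simp only [cext, LinearMap.baseChange_add, LinearMap.baseChange_smul,
      LinearMap.baseChange_id, LinearMap.add_apply, LinearMap.smul_apply,
      LinearMap.id_apply, rsmul]
  constructor
  · -- invariance ⇒ 𝓡η = 0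
    intro h x y
    have hJinv : ∀ x y : ℂ ⊗[ℝ] V, η (cext J x) (cext J y) = η x y := by
      intro x y
      have h1 := h 0 0 1 0 (by norm_num) x y
      simpa using h1
    have hKinv : ∀ x y : ℂ ⊗[ℝ] V, η (cext K x) (cext K y) = η x y := by
      intro x y
      have h1 := h 0 0 0 1 (by norm_num) x y
      simpa using h1
    set s : ℝ := (Real.sqrt 2)⁻¹ with hs
    have hs2 : s ^ 2 = 2⁻¹ := by
      rw [hs, inv_pow, Real.sq_sqrt (by norm_num : (0:ℝ) ≤ 2)]
    have hsc : (s : ℂ) ^ 2 = 2⁻¹ := by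
      rw [← Complex.ofReal_pow, hs2]
      norm_num
    have hSJ : η (cext J x) y + η x (cext J y) = 0 := by
      have h2 := h s 0 s 0 (by rw [hs2]; norm_num) x y
      rw [hq, hq] at h2
      simp only [Complex.ofReal_zero, zero_smul, add_zero, zero_add, map_add,
        map_smul, LinearMap.add_apply, LinearMap.smul_apply, smul_eq_mul] at h2
      rw [hJinv x y] at h2
      linear_combination 2 * h2 -
        (2 * (2 * η x y + η (cext J x) y + η x (cext J y))) * hsc
    have hSK : η (cext K x) y + η x (cext K y) = 0 := by
      have h2 := h s 0 0 s (by rw [hs2]; norm_num) x y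
      rw [hq, hq] at h2
      simp only [Complex.ofReal_zero, zero_smul, add_zero, zero_add, map_add,
        map_smul, LinearMap.add_apply, LinearMap.smul_apply, smul_eq_mul] at h2
      rw [hKinv x y] at h2
      linear_combination 2 * h2 -
        (2 * (2 * η x y + η (cext K x) y + η x (cext K y))) * hsc
    simp only [su2Op]
    linear_combination (-2⁻¹ : ℂ) * hSJ + (2⁻¹ * Complex.I) * hSK
  · -- 𝓡η = 0 ⇒ invariance
    intro h0 a b c d hn x y
    have hR : ∀ x y : ℂ ⊗[ℝ] V, η (cext J x) y + η x (cext J y) =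
        Complex.I * (η (cext K x) y + η x (cext K y)) := by
      intro x y
      have h1 := h0 x y
      simp only [su2Op] at h1
      linear_combination (-2 : ℂ) * h1
    -- vanishing of 𝓙η on eigenvectors
    have mixedJ1 : ∀ {x y : ℂ ⊗[ℝ] V}, cext I x = Complex.I • x →
        cext I y = -Complex.I • y → η (cext J x) y = 0 ∧ η x (cext J y) = 0 := by
      intro x y hx hy
      exact ⟨h22 (hPB hx) hy, h11 hx (hMB hy)⟩
    have mixedJ2 : ∀ {x y : ℂ ⊗[ℝ] V}, cext I x = -Complex.I • x →
        cext I y = Complex.I • y → η (cext J x) y = 0 ∧ η x (cext J y) = 0 := by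
      intro x y hx hy
      exact ⟨h11 (hMB hx) hy, h22 hx (hPB hy)⟩
    have Smm : ∀ {x y : ℂ ⊗[ℝ] V}, cext I x = -Complex.I • x →
        cext I y = -Complex.I • y → η (cext J x) y + η x (cext J y) = 0 := by
      intro x y hx hy
      have h1 := hR x y
      rw [hMK hx, hMK hy] at h1
      simp only [map_smul, LinearMap.smul_apply, smul_eq_mul] at h1
      linear_combination 2⁻¹ * h1 +
        2⁻¹ * (η (cext J x) y + η x (cext J y)) * Complex.I_sq
    have Spp : ∀ {x y : ℂ ⊗[ℝ] V}, cext I x = Complex.I • x →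
        cext I y = Complex.I • y → η (cext J x) y + η x (cext J y) = 0 := by
      intro x y hx hy
      have h1 := Smm (hPB hx) (hPB hy)
      rw [pBB x, pBB y] at h1
      simp only [map_neg, LinearMap.neg_apply] at h1
      linear_combination -h1
    -- 𝓙η = 0 in general
    have TJ : ∀ x y : ℂ ⊗[ℝ] V, η (cext J x) y + η x (cext J y) = 0 := by
      intro x y
      obtain ⟨xp, xm, hxp, hxm, rfl⟩ := hdecomp x
      obtain ⟨yp, ym, hyp, hym, rfl⟩ := hdecomp y
      have e1 := Spp hxp hyp
      have e2 := Smm hxm hym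
      have m1 := mixedJ1 hxp hym
      have m2 := mixedJ2 hxm hyp
      simp only [map_add, LinearMap.add_apply]
      linear_combination e1 + e2 + m1.1 + m1.2 + m2.1 + m2.2
    -- 𝓚η = 0 in general
    have TK : ∀ x y : ℂ ⊗[ℝ] V, η (cext K x) y + η x (cext K y) = 0 := by
      have SKpp : ∀ {x y : ℂ ⊗[ℝ] V}, cext I x = Complex.I • x →
          cext I y = Complex.I • y → η (cext K x) y + η x (cext K y) = 0 := by
        intro x y hx hy
        rw [hPK hx, hPK hy]
        simp only [map_neg, map_smul, LinearMap.neg_apply, LinearMap.smul_apply,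
          smul_eq_mul]
        linear_combination (-Complex.I) * Spp hx hy
      have SKmm : ∀ {x y : ℂ ⊗[ℝ] V}, cext I x = -Complex.I • x →
          cext I y = -Complex.I • y → η (cext K x) y + η x (cext K y) = 0 := by
        intro x y hx hy
        rw [hMK hx, hMK hy]
        simp only [map_smul, LinearMap.smul_apply, smul_eq_mul]
        linear_combination Complex.I * Smm hx hy
      have SKm1 : ∀ {x y : ℂ ⊗[ℝ] V}, cext I x = Complex.I • x →
          cext I y = -Complex.I • y → η (cext K x) y + η x (cext K y) = 0 := by
        intro x y hx hy
        rw [hPK hx, hMK hy]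
        simp only [map_neg, map_smul, LinearMap.neg_apply, LinearMap.smul_apply,
          smul_eq_mul]
        have m := mixedJ1 hx hy
        linear_combination (-Complex.I) * m.1 + Complex.I * m.2
      have SKm2 : ∀ {x y : ℂ ⊗[ℝ] V}, cext I x = -Complex.I • x →
          cext I y = Complex.I • y → η (cext K x) y + η x (cext K y) = 0 := by
        intro x y hx hy
        rw [hMK hx, hPK hy]
        simp only [map_neg, map_smul, LinearMap.neg_apply, LinearMap.smul_apply,
          smul_eq_mul]
        have m := mixedJ2 hx hy
        linear_combination Complex.I * m.1 + (-Complex.I) * m.2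
      intro x y
      obtain ⟨xp, xm, hxp, hxm, rfl⟩ := hdecomp x
      obtain ⟨yp, ym, hyp, hym, rfl⟩ := hdecomp y
      have e1 := SKpp hxp hyp
      have e2 := SKmm hxm hym
      have m1 := SKm1 hxp hym
      have m2 := SKm2 hxm hyp
      simp only [map_add, LinearMap.add_apply]
      linear_combination e1 + e2 + m1 + m2
    -- 𝓘η = 0 in general
    have TI : ∀ x y : ℂ ⊗[ℝ] V, η (cext I x) y + η x (cext I y) = 0 := by
      have SIpp : ∀ {x y : ℂ ⊗[ℝ] V}, cext I x = Complex.I • x →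
          cext I y = Complex.I • y → η (cext I x) y + η x (cext I y) = 0 := by
        intro x y hx hy
        rw [hx, hy]
        simp only [map_smul, LinearMap.smul_apply, smul_eq_mul]
        linear_combination (2 * Complex.I) * h11 hx hy
      have SImm : ∀ {x y : ℂ ⊗[ℝ] V}, cext I x = -Complex.I • x →
          cext I y = -Complex.I • y → η (cext I x) y + η x (cext I y) = 0 := by
        intro x y hx hy
        rw [hx, hy]
        simp only [neg_smul, map_neg, map_smul, LinearMap.neg_apply,
          LinearMap.smul_apply, smul_eq_mul]
        linear_combination (-2 * Complex.I) * h22 hx hy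
      have SIm1 : ∀ {x y : ℂ ⊗[ℝ] V}, cext I x = Complex.I • x →
          cext I y = -Complex.I • y → η (cext I x) y + η x (cext I y) = 0 := by
        intro x y hx hy
        rw [hx, hy]
        simp only [neg_smul, map_neg, map_smul, LinearMap.neg_apply,
          LinearMap.smul_apply, smul_eq_mul]
        ring
      have SIm2 : ∀ {x y : ℂ ⊗[ℝ] V}, cext I x = -Complex.I • x →
          cext I y = Complex.I • y → η (cext I x) y + η x (cext I y) = 0 := by
        intro x y hx hy
        rw [hx, hy]
        simp only [neg_smul, map_neg, map_smul, LinearMap.neg_apply,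
          LinearMap.smul_apply, smul_eq_mul]
        ring
      intro x y
      obtain ⟨xp, xm, hxp, hxm, rfl⟩ := hdecomp x
      obtain ⟨yp, ym, hyp, hym, rfl⟩ := hdecomp y
      have e1 := SIpp hxp hyp
      have e2 := SImm hxm hym
      have m1 := SIm1 hxp hym
      have m2 := SIm2 hxm hyp
      simp only [map_add, LinearMap.add_apply]
      linear_combination e1 + e2 + m1 + m2
    -- adjointness
    have aI : ∀ z w : ℂ ⊗[ℝ] V, η (cext I z) w = -η z (cext I w) := by
      intro z w
      linear_combination TI z w
    have aJ : ∀ z w : ℂ ⊗[ℝ] V, η (cext J z) w = -η z (cext J w) := by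
      intro z w
      linear_combination TJ z w
    have aK : ∀ z w : ℂ ⊗[ℝ] V, η (cext K z) w = -η z (cext K w) := by
      intro z w
      linear_combination TK z w
    -- unit-quaternion invariance
    have hn' : (a : ℂ) ^ 2 + (b : ℂ) ^ 2 + (c : ℂ) ^ 2 + (d : ℂ) ^ 2 = 1 := by
      exact_mod_cast hn
    rw [hq, hq]
    simp only [map_add, map_smul, LinearMap.add_apply, LinearMap.smul_apply,
      smul_eq_mul]
    simp only [aI, aJ, aK]
    simp only [pAA, pBB, pCC, pAB, pBA, pAC, pCA, pBC, pCB, map_neg,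
      LinearMap.neg_apply]
    linear_combination (η x y) * hn'

end
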